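/- For γ ∈ ℝ, let d_γ be the symmetric function on the six-point set {a, b, c, e, z₁, z₂} with d(a,b) = d(a,c) = d(a,e) = d(b,c) = d(b,e) = 2, d(c,e) = 1, d(a,z₁) = d(b,z₁) = d(c,z₁) = d(e,z₁) = 1, d(a,z₂) = d(b,z₂) = d(c,z₂) = 1, d(e,z₂) = 2, and d(z₁,z₂) = γ. Then: (i) for every γ with 1 ≤ γ ≤ 2, d_γ is a metric; and (ii) for every γ > 0, d_γ is not L1-embeddable: there is no measure space (Ω, 𝒜, μ) and map φ from the six points to L1(μ) with ‖φ(x) − φ(y)‖ = d_γ(x, y) for all x, y. -/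

import Mathlib

/-!
Every `L¹` metric satisfies the pentagonal inequality
`d(a,b) + d(a,c) + d(b,c) + d(z₁,z₂) ≤ ∑_{x ∈ {a,b,c}, z ∈ {z₁,z₂}} d(x,z)`:
on the real line it is a finite case check, and an `L¹` distance is an integral of line distances.
For `d_γ` the left side is `6 + γ` and the right side is `6`, so no `γ > 0` is embeddable.
-/

open MeasureTheory

/-- The six-point distance function on `a = 0, b = 1, c = 2, e = 3, z₁ = 4, z₂ = 5` with
`d(a,b) = d(a,c) = d(a,e) = d(b,c) = d(b,e) = 2`, `d(c,e) = 1`,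
`d(x,z₁) = 1` for `x ∈ {a,b,c,e}`, `d(a,z₂) = d(b,z₂) = d(c,z₂) = 1`, `d(e,z₂) = 2`,
and `d(z₁,z₂) = γ`. -/
noncomputable def dSix (γ : ℝ) (x y : Fin 6) : ℝ :=
  if x = y then 0
  else if x = 5 ∨ y = 5 then
    (if x = 4 ∨ y = 4 then γ
     else if x = 3 ∨ y = 3 then 2
     else 1)
  else if x = 4 ∨ y = 4 then 1
  else if (x = 2 ∧ y = 3) ∨ (x = 3 ∧ y = 2) then 1
  else 2

theorem abs_sub_pentagonal (a b c y z : ℝ) :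
    |a - b| + |a - c| + |b - c| + |y - z| ≤
      |a - y| + |a - z| + |b - y| + |b - z| + |c - y| + |c - z| := by
  rcases abs_cases (a - b) with ⟨hab, -⟩ | ⟨hab, -⟩ <;>
  rcases abs_cases (a - c) with ⟨hac, -⟩ | ⟨hac, -⟩ <;>
  rcases abs_cases (b - c) with ⟨hbc, -⟩ | ⟨hbc, -⟩ <;>
  rcases abs_cases (y - z) with ⟨hyz, -⟩ | ⟨hyz, -⟩ <;>
  rw [hab, hac, hbc, hyz] <;>
  linarith [le_abs_self (a - y), neg_abs_le (a - y), le_abs_self (a - z), neg_abs_le (a - z),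
    le_abs_self (b - y), neg_abs_le (b - y), le_abs_self (b - z), neg_abs_le (b - z),
    le_abs_self (c - y), neg_abs_le (c - y), le_abs_self (c - z), neg_abs_le (c - z)]

namespace MeasureTheory.L1

variable {Ω : Type*} [MeasurableSpace Ω] {μ : Measure Ω}

theorem norm_sub_eq_integral_abs (f g : Lp ℝ 1 μ) : ‖f - g‖ = ∫ ω, |f ω - g ω| ∂μ := by
  rw [norm_eq_integral_norm]
  refine integral_congr_ae ?_
  filter_upwards [Lp.coeFn_sub f g] with ω h
  rw [h, Pi.sub_apply, Real.norm_eq_abs]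

theorem norm_sub_pentagonal (a b c y z : Lp ℝ 1 μ) :
    ‖a - b‖ + ‖a - c‖ + ‖b - c‖ + ‖y - z‖ ≤
      ‖a - y‖ + ‖a - z‖ + ‖b - y‖ + ‖b - z‖ + ‖c - y‖ + ‖c - z‖ := by
  have key := integral_mono (μ := μ) (by fun_prop) (by fun_prop)
    fun ω => abs_sub_pentagonal (a ω) (b ω) (c ω) (y ω) (z ω)
  simp only [norm_sub_eq_integral_abs]
  simpa (disch := fun_prop) only [MeasureTheory.integral_add] using key

end MeasureTheory.L1

theorem dSix_eq_zero_iff {γ : ℝ} (hγ : 1 ≤ γ) (x y : Fin 6) : dSix γ x y = 0 ↔ x = y := by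
  fin_cases x <;> fin_cases y <;> simp [dSix] <;> linarith

theorem dSix_comm (γ : ℝ) (x y : Fin 6) : dSix γ x y = dSix γ y x := by
  fin_cases x <;> fin_cases y <;> simp [dSix]

theorem dSix_triangle {γ : ℝ} (h₁ : 1 ≤ γ) (h₂ : γ ≤ 2) (x y z : Fin 6) :
    dSix γ x z ≤ dSix γ x y + dSix γ y z := by
  fin_cases x <;> fin_cases y <;> fin_cases z <;> simp [dSix] <;> linarith

theorem not_isometry_dSix_L1 {γ : ℝ} (hγ : 0 < γ) {Ω : Type*} [MeasurableSpace Ω]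
    {μ : Measure Ω} (φ : Fin 6 → Lp ℝ 1 μ) : ¬ ∀ x y, ‖φ x - φ y‖ = dSix γ x y := by
  intro hφ
  have := L1.norm_sub_pentagonal (φ 0) (φ 1) (φ 2) (φ 4) (φ 5)
  simp +decide [hφ, dSix] at this
  linarith

theorem dSix_metric_and_not_L1.{u} :
    (∀ γ : ℝ, 1 ≤ γ → γ ≤ 2 →
      (∀ x y : Fin 6, dSix γ x y = 0 ↔ x = y) ∧
      (∀ x y : Fin 6, dSix γ x y = dSix γ y x) ∧
      (∀ x y z : Fin 6, dSix γ x z ≤ dSix γ x y + dSix γ y z)) ∧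
    (∀ γ : ℝ, 0 < γ →
      ∀ (Ω : Type u) (_ : MeasurableSpace Ω) (μ : Measure Ω)
        (φ : Fin 6 → Lp ℝ 1 μ),
        ¬ (∀ x y : Fin 6, ‖φ x - φ y‖ = dSix γ x y)) :=
  ⟨fun _ h₁ h₂ => ⟨dSix_eq_zero_iff h₁, dSix_comm _, dSix_triangle h₁ h₂⟩,
    fun _ hγ _ _ _ φ => not_isometry_dSix_L1 hγ φ⟩
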